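/- arXiv:2112.11970 — 4 statements merged into one kernel-verified Lean document; each statement's English description precedes it below -/
import Mathlib

section
/- A necklace graph has a star cutset if and only if it has a short bead. -/
namespace BurlingFormal

open SimpleGraph

/-- An orientation of a simple graph, given as a relation choosing a direction for each edge. -/
def IsOrientation {V : Type} (G : SimpleGraph V) (A : V → V → Prop) : Prop :=
  (∀ u v, A u v → G.Adj u v) ∧ (∀ u v, G.Adj u v → (A u v ↔ ¬ A v u))

/-- A chordless cycle: a cycle such that every adjacency between its vertices is a cycle edge. -/
def IsChordlessCycle {V : Type} (G : SimpleGraph V) {v : V} (c : G.Walk v v) : Prop :=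
  c.IsCycle ∧ ∀ x y, x ∈ c.support → y ∈ c.support → G.Adj x y → s(x, y) ∈ c.edges

/-- A hole: a chordless cycle of length at least 4. -/
def IsHole {V : Type} (G : SimpleGraph V) {v : V} (c : G.Walk v v) : Prop :=
  IsChordlessCycle G c ∧ 4 ≤ c.length

/-- A source of a hole w.r.t. an orientation: both its neighbours on the hole are out-neighbours. -/
def IsHoleSource {V : Type} {G : SimpleGraph V} {v : V} (A : V → V → Prop)
    (c : G.Walk v v) (x : V) : Prop :=
  x ∈ c.support ∧ ∀ y, s(x, y) ∈ c.edges → A x y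

/-- A sink of a hole w.r.t. an orientation: both its neighbours on the hole are in-neighbours. -/
def IsHoleSink {V : Type} {G : SimpleGraph V} {v : V} (A : V → V → Prop)
    (c : G.Walk v v) (x : V) : Prop :=
  x ∈ c.support ∧ ∀ y, s(x, y) ∈ c.edges → A y x

/-- An extremum of a hole: a source or a sink of it. -/
def IsHoleExtremum {V : Type} {G : SimpleGraph V} {v : V} (A : V → V → Prop)
    (c : G.Walk v v) (x : V) : Prop :=
  IsHoleSource A c x ∨ IsHoleSink A c x

/-- The hole has exactly two sources and exactly two sinks. -/
def TwoSourcesTwoSinks {V : Type} {G : SimpleGraph V} {v : V} (A : V → V → Prop)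
    (c : G.Walk v v) : Prop :=
  (∃ s₁ s₂, s₁ ≠ s₂ ∧ IsHoleSource A c s₁ ∧ IsHoleSource A c s₂ ∧
    ∀ s, IsHoleSource A c s → s = s₁ ∨ s = s₂) ∧
  (∃ t₁ t₂, t₁ ≠ t₂ ∧ IsHoleSink A c t₁ ∧ IsHoleSink A c t₂ ∧
    ∀ t, IsHoleSink A c t → t = t₁ ∨ t = t₂)

/-- The pivot of a hole: a sink adjacent on the hole to all of its sources. -/
def IsHolePivot {V : Type} {G : SimpleGraph V} {v : V} (A : V → V → Prop)
    (c : G.Walk v v) (x : V) : Prop :=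
  IsHoleSink A c x ∧ ∀ y, IsHoleSource A c y → s(x, y) ∈ c.edges

/-- A subordinate vertex of a hole: neither an antenna (source) nor the pivot. -/
def IsHoleSubordinate {V : Type} {G : SimpleGraph V} {v : V} (A : V → V → Prop)
    (c : G.Walk v v) (x : V) : Prop :=
  x ∈ c.support ∧ ¬ IsHoleSource A c x ∧ ¬ IsHolePivot A c x

/-- `S` is the vertex set of a (possibly empty) branch (downward path) starting at `u`
in the rooted tree given by the parent function. -/
def IsBranchFrom {V : Type} (parent : V → V) (u : V) (S : Set V) : Prop :=
  S = ∅ ∨ (u ∈ S ∧ (∀ w ∈ S, w ≠ u → parent w ∈ S ∧ parent w ≠ w) ∧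
    ∀ w ∈ S, ∀ w' ∈ S, w ≠ u → w' ≠ u → parent w = parent w' → w = w')

/-- A Burling tree: a rooted tree (given by a parent function) together with a last-born
function and a choose function assigning to each non-last-born non-root vertex the vertex set
of a branch starting at the last-born of its parent. -/
structure BurlingTree (V : Type) where
  parent : V → V
  root : V
  parent_root : parent root = root
  reach : ∀ v, ∃ n, parent^[n] v = root
  lastBorn : V → V
  lastBorn_child : ∀ v, (∃ u, u ≠ v ∧ parent u = v) → parent (lastBorn v) = v ∧ lastBorn v ≠ v
  choosePath : V → Set V
  choosePath_empty : ∀ v, v = root ∨ v = lastBorn (parent v) → choosePath v = ∅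
  choosePath_branch : ∀ v, v ≠ root → v ≠ lastBorn (parent v) →
    IsBranchFrom parent (lastBorn (parent v)) (choosePath v)

/-- The arcs of the oriented graph fully derived from a Burling tree. -/
def BurlingTree.Arc {V : Type} (T : BurlingTree V) (u v : V) : Prop :=
  v ∈ T.choosePath u

/-- `A` orients `G` so that `G` with this orientation is an oriented graph derived from
some Burling tree (an oriented Burling graph). -/
def IsOrientedBurling {W : Type} (G : SimpleGraph W) (A : W → W → Prop) : Prop :=
  IsOrientation G A ∧
    ∃ (V : Type) (T : BurlingTree V) (f : W ↪ V), ∀ u v, A u v ↔ T.Arc (f u) (f v)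

/-- A Burling graph (equivalently, a derived graph): the underlying graph of an oriented
graph derived from a Burling tree. -/
def IsBurlingGraph {W : Type} (G : SimpleGraph W) : Prop :=
  ∃ A, IsOrientedBurling G A

/-- A global subordinate vertex of a Burling graph: subordinate in some hole, for every
orientation of the graph as an oriented Burling graph. -/
def IsGlobalSubordinate {W : Type} (G : SimpleGraph W) (x : W) : Prop :=
  ∀ A, IsOrientedBurling G A →
    ∃ (v : W) (c : G.Walk v v), IsHole G c ∧ IsHoleSubordinate A c x

/-- `H` is a subdivision of `G` via the branch-vertex embedding `f` and the system of
paths `P` replacing the edges of `G`. -/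
def IsSubdivisionVia {V W : Type} (H : SimpleGraph W) (G : SimpleGraph V) (f : V ↪ W)
    (P : ∀ ⦃u v : V⦄, G.Adj u v → H.Walk (f u) (f v)) : Prop :=
  (∀ ⦃u v⦄ (h : G.Adj u v), (P h).IsPath ∧ 1 ≤ (P h).length) ∧
  (∀ ⦃u v⦄ (h : G.Adj u v) (x : V), f x ∈ (P h).support → x = u ∨ x = v) ∧
  (∀ ⦃u v u' v'⦄ (h : G.Adj u v) (h' : G.Adj u' v'), s(u, v) ≠ s(u', v') →
    ∀ w, w ∈ (P h).support → w ∈ (P h').support → ∃ x : V, w = f x) ∧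
  (∀ w : W, ∃ u v, ∃ h : G.Adj u v, w ∈ (P h).support) ∧
  (∀ ⦃x y : W⦄, H.Adj x y → ∃ u v, ∃ h : G.Adj u v, s(x, y) ∈ (P h).edges)

/-- `H` is a subdivision of `G`. -/
def IsSubdivision {V W : Type} (H : SimpleGraph W) (G : SimpleGraph V) : Prop :=
  ∃ (f : V ↪ W) (P : ∀ ⦃u v : V⦄, G.Adj u v → H.Walk (f u) (f v)), IsSubdivisionVia H G f P

/-- `G` contains an induced copy of `H`. -/
def InducedCopy {V W : Type} (H : SimpleGraph W) (G : SimpleGraph V) : Prop :=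
  ∃ f : W ↪ V, ∀ a b, H.Adj a b ↔ G.Adj (f a) (f b)

/-- The clique number of a graph. -/
noncomputable def cliqueNumber {V : Type} (G : SimpleGraph V) : ℕ :=
  sSup {n | ∃ s : Finset V, G.IsNClique n s}

/-- `G` belongs to `Forb*(H)`: it has no induced subdivision of `H`. -/
def InForbs {VH V : Type} (H : SimpleGraph VH) (G : SimpleGraph V) : Prop :=
  ∀ (U : Type) (S : SimpleGraph U), IsSubdivision S H → ¬ InducedCopy S G

/-- `H` is weakly pervasive: the class `Forb*(H)` (of finite graphs) is χ-bounded. -/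
def WeaklyPervasive {VH : Type} (H : SimpleGraph VH) : Prop :=
  ∃ f : ℕ → ℕ, ∀ (V : Type) (_ : Fintype V) (G : SimpleGraph V),
    InForbs H G → G.chromaticNumber ≤ (f (cliqueNumber G) : ℕ∞)

/-- `G` has a star cutset centered at `v`. -/
def HasStarCutsetAt {V : Type} (G : SimpleGraph V) (v : V) : Prop :=
  ∃ S : Set V, v ∈ S ∧ (∀ u ∈ S, u = v ∨ G.Adj v u) ∧ ¬ (G.induce Sᶜ).Preconnected

/-- `G` has a star cutset. -/
def HasStarCutset {V : Type} (G : SimpleGraph V) : Prop :=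
  ∃ v, HasStarCutsetAt G v

/-- The structure of an `m`-necklace on the graph `G`: beads `B i` (chordless cycles of
length at least 4 through the non-adjacent vertices `a i`, `b i`) joined cyclically by
paths `P i` from `b i` to `a (i+1)` (of length possibly 0, i.e. identification),
with no further vertices or edges. -/
structure Necklace {V : Type} (G : SimpleGraph V) (m : ℕ) where
  a : ZMod m → V
  b : ZMod m → V
  B : ∀ i, G.Walk (a i) (a i)
  P : ∀ i, G.Walk (b i) (a (i + 1))
  B_cycle : ∀ i, (B i).IsCycle
  B_len : ∀ i, 4 ≤ (B i).length
  b_mem : ∀ i, b i ∈ (B i).support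
  ab_ne : ∀ i, a i ≠ b i
  ab_nonadj : ∀ i, ¬ G.Adj (a i) (b i)
  P_path : ∀ i, (P i).IsPath
  bead_disjoint : ∀ i j, i ≠ j → ∀ x, x ∈ (B i).support → x ∈ (B j).support →
    (j = i + 1 ∧ x = b i ∧ x = a j) ∨ (i = j + 1 ∧ x = b j ∧ x = a i)
  path_bead_disjoint : ∀ i j (x : V), x ∈ (P i).support → x ∈ (B j).support →
    x = b i ∨ x = a (i + 1)
  path_disjoint : ∀ i j, i ≠ j → ∀ x, x ∈ (P i).support → x ∈ (P j).support →
    (x = b i ∨ x = a (i + 1)) ∧ (x = b j ∨ x = a (j + 1))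
  cover_vertex : ∀ x : V, (∃ i, x ∈ (B i).support) ∨ ∃ i, x ∈ (P i).support
  cover_edge : ∀ x y, G.Adj x y → (∃ i, s(x, y) ∈ (B i).edges) ∨ ∃ i, s(x, y) ∈ (P i).edges

/-- The bead `B i` of a necklace is short if `a i` and `b i` have a common neighbour. -/
def Necklace.Short {V : Type} {G : SimpleGraph V} {m : ℕ} (N : Necklace G m)
    (i : ZMod m) : Prop :=
  ∃ w, G.Adj (N.a i) w ∧ G.Adj (N.b i) w

/-- A chandelier: an in-tree (given by a parent function on `V \ {hub}`) with at least two
leaves, together with an extra vertex `hub` joined to all the leaves. -/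
structure Chandelier (V : Type) where
  hub : V
  root : V
  parent : V → V
  hub_ne_root : hub ≠ root
  parent_root : parent root = root
  parent_hub : parent hub = hub
  parent_ne_hub : ∀ u, u ≠ hub → parent u ≠ hub
  reach : ∀ u, u ≠ hub → ∃ n, parent^[n] u = root
  two_leaves : ∃ l₁ l₂ : V, l₁ ≠ l₂ ∧
    (l₁ ≠ hub ∧ l₁ ≠ root ∧ ∀ w, parent w = l₁ → w = l₁) ∧
    (l₂ ≠ hub ∧ l₂ ≠ root ∧ ∀ w, parent w = l₂ → w = l₂)

/-- A leaf of the in-tree of a chandelier. -/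
def Chandelier.IsLeaf {V : Type} (C : Chandelier V) (u : V) : Prop :=
  u ≠ C.hub ∧ u ≠ C.root ∧ ∀ w, C.parent w = u → w = u

/-- The arcs of (the oriented version of) a chandelier. -/
def Chandelier.Arc {V : Type} (C : Chandelier V) (u w : V) : Prop :=
  (u ≠ C.hub ∧ u ≠ C.root ∧ w = C.parent u) ∨ (C.IsLeaf u ∧ w = C.hub)

/-- The underlying (non-oriented) graph of a chandelier. -/
def Chandelier.graph {V : Type} (C : Chandelier V) : SimpleGraph V :=
  SimpleGraph.fromRel C.Arc

/-- There is a vertex lying on every cycle of the graph. -/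
def HasUniversalCycleVertex {V : Type} (G : SimpleGraph V) : Prop :=
  ∃ x : V, ∀ (w : V) (c : G.Walk w w), c.IsCycle → x ∈ c.support

/-- A Burling-admissible type-4 subdivision of `K₄` sitting inside `G`: branch vertices
`x, y, z, w`, where the two non-subdivided edges `xy`, `xz` share the endpoint `x`, and the
four other edges are replaced by internally disjoint paths of length at least 2. -/
structure Type4K4Core {V : Type} (G : SimpleGraph V) where
  x : V
  y : V
  z : V
  w : V
  ne_xy : x ≠ y
  ne_xz : x ≠ z
  ne_xw : x ≠ w
  ne_yz : y ≠ z
  ne_yw : y ≠ w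
  ne_zw : z ≠ w
  adj_xy : G.Adj x y
  adj_xz : G.Adj x z
  Pxw : G.Walk x w
  Pyz : G.Walk y z
  Pyw : G.Walk y w
  Pzw : G.Walk z w
  Pxw_path : Pxw.IsPath
  Pyz_path : Pyz.IsPath
  Pyw_path : Pyw.IsPath
  Pzw_path : Pzw.IsPath
  Pxw_len : 2 ≤ Pxw.length
  Pyz_len : 2 ≤ Pyz.length
  Pyw_len : 2 ≤ Pyw.length
  Pzw_len : 2 ≤ Pzw.length
  d₁ : ∀ v, v ∈ Pxw.support → v ∈ Pyz.support → False
  d₂ : ∀ v, v ∈ Pxw.support → v ∈ Pyw.support → v = w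
  d₃ : ∀ v, v ∈ Pxw.support → v ∈ Pzw.support → v = w
  d₄ : ∀ v, v ∈ Pyz.support → v ∈ Pyw.support → v = y
  d₅ : ∀ v, v ∈ Pyz.support → v ∈ Pzw.support → v = z
  d₆ : ∀ v, v ∈ Pyw.support → v ∈ Pzw.support → v = w

/-- The vertex set of a type-4 `K₄`-subdivision configuration. -/
def Type4K4Core.supp {V : Type} {G : SimpleGraph V} (c : Type4K4Core G) : Set V :=
  {v | v ∈ c.Pxw.support ∨ v ∈ c.Pyz.support ∨ v ∈ c.Pyw.support ∨ v ∈ c.Pzw.support}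

/-- The edge set of a type-4 `K₄`-subdivision configuration. -/
def Type4K4Core.edges {V : Type} {G : SimpleGraph V} (c : Type4K4Core G) : Set (Sym2 V) :=
  {e | e ∈ c.Pxw.edges ∨ e ∈ c.Pyz.edges ∨ e ∈ c.Pyw.edges ∨ e ∈ c.Pzw.edges ∨
    e = s(c.x, c.y) ∨ e = s(c.x, c.z)}

/-- The configuration exhausts the whole graph `G`. -/
def Type4K4Core.Spanning {V : Type} {G : SimpleGraph V} (c : Type4K4Core G) : Prop :=
  (∀ v : V, v ∈ c.supp) ∧ ∀ u v, G.Adj u v → s(u, v) ∈ c.edges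

/-- A vertex of degree exactly 2. -/
def DegTwo {V : Type} (G : SimpleGraph V) (x : V) : Prop :=
  ∃ p q, p ≠ q ∧ G.Adj x p ∧ G.Adj x q ∧ ∀ r, G.Adj x r → r = p ∨ r = q

/-!
If the bead `B i` is short, with `a i` and `b i` adjacent to `w`, then `{a i, b i, w}` is a star
cutset centred at `w`: it separates the rest of `B i` from the rest of the necklace.

Conversely, let no bead be short and let `S` be a star centred at `v`. Every bead minus `S` is
connected: `S` meets a bead either inside the closed bead-neighbourhood of one of its vertices
lying in `S` (beads are chordless), or in at most one of its two junctions `a i`, `b i` (both would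
make the bead short). Likewise every surviving vertex of a connecting path reaches a surviving end
of that path. Finally, the junctions in `S`, together with the only connecting path that may
contain `v`, all sit in one gap between two consecutive beads; going once around the necklace,
starting right after the gap, connects all surviving junctions.
-/

section Avoiding

variable {V : Type}

def IsStar (G : SimpleGraph V) (S : Set V) (v : V) : Prop :=
  v ∈ S ∧ ∀ u ∈ S, u = v ∨ G.Adj v u

def ReachableAvoiding (G : SimpleGraph V) (S : Set V) (x y : V) : Prop :=
  ∃ (hx : x ∉ S) (hy : y ∉ S), (G.induce Sᶜ).Reachable ⟨x, hx⟩ ⟨y, hy⟩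

variable {G : SimpleGraph V} {S : Set V} {u v w x y z : V}

lemma IsStar.adj (hS : IsStar G S v) (hu : u ∈ S) (huv : u ≠ v) : G.Adj v u :=
  (hS.2 u hu).resolve_left huv

namespace ReachableAvoiding

lemma notMem_right (h : ReachableAvoiding G S x y) : y ∉ S := h.2.1

lemma refl (hx : x ∉ S) : ReachableAvoiding G S x x := ⟨hx, hx, .rfl⟩

lemma symm (h : ReachableAvoiding G S x y) : ReachableAvoiding G S y x :=
  let ⟨hx, hy, h⟩ := h
  ⟨hy, hx, h.symm⟩

lemma trans (h₁ : ReachableAvoiding G S x y) (h₂ : ReachableAvoiding G S y z) :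
    ReachableAvoiding G S x z :=
  let ⟨hx, _, h₁⟩ := h₁
  let ⟨_, hz, h₂⟩ := h₂
  ⟨hx, hz, h₁.trans h₂⟩

lemma of_adj (hx : x ∉ S) (hy : y ∉ S) (h : G.Adj x y) : ReachableAvoiding G S x y :=
  ⟨hx, hy, (induce_adj.mpr h).reachable⟩

end ReachableAvoiding

lemma reachableAvoiding_getVert (p : G.Walk u w) {i j : ℕ} (hij : i ≤ j)
    (h : ∀ k, i ≤ k → k ≤ j → p.getVert k ∉ S) :
    ReachableAvoiding G S (p.getVert i) (p.getVert j) := by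
  induction j, hij using Nat.le_induction with
  | base => exact .refl (h i le_rfl le_rfl)
  | succ j hij ih =>
    refine (ih fun k hik hkj => h k hik (by omega)).trans ?_
    rcases lt_or_ge j p.length with hj | hj
    · exact .of_adj (h j hij (by omega)) (h (j + 1) (by omega) le_rfl) (p.adj_getVert_succ hj)
    · have hend : p.getVert (j + 1) = p.getVert j := by
        rw [p.getVert_of_length_le hj, p.getVert_of_length_le (by omega)]
      rw [hend]
      exact .refl (h j hij (by omega))

lemma reachableAvoiding_of_mem_support (p : G.Walk u w) (hp : ∀ z ∈ p.support, z ∉ S)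
    (hx : x ∈ p.support) (hy : y ∈ p.support) : ReachableAvoiding G S x y := by
  obtain ⟨i, rfl, -⟩ := Walk.mem_support_iff_exists_getVert.mp hx
  obtain ⟨j, rfl, -⟩ := Walk.mem_support_iff_exists_getVert.mp hy
  have h k : p.getVert k ∉ S := hp _ (p.getVert_mem_support k)
  rcases le_total i j with hij | hji
  · exact reachableAvoiding_getVert p hij fun k _ _ => h k
  · exact (reachableAvoiding_getVert p hji fun k _ _ => h k).symm

lemma index_eq_of_mem_edges {p : G.Walk u w} (hp : p.IsPath) {k l : ℕ} (hk : k ≤ p.length)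
    (hl : l ≤ p.length) (h : s(p.getVert k, p.getVert l) ∈ p.edges) :
    l + 1 = k ∨ k + 1 = l := by
  obtain ⟨i, hi, hil⟩ := p.toSubgraph_adj_iff.mp (Walk.adj_toSubgraph_iff_mem_edges.mpr h)
  have inj := hp.getVert_injOn
  rcases Sym2.eq_iff.mp hi with ⟨h₁, h₂⟩ | ⟨h₁, h₂⟩
  · have := inj (show i ≤ p.length by omega) hk h₁
    have := inj (show i + 1 ≤ p.length by omega) hl h₂
    omega
  · have := inj (show i ≤ p.length by omega) hl h₁
    have := inj (show i + 1 ≤ p.length by omega) hk h₂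
    omega

lemma reachableAvoiding_ends_of_isPath {p : G.Walk u w} (hp : p.IsPath) (hv : v ∈ p.support)
    (hvS : v ∈ S) (hS : ∀ z ∈ p.support, z ∈ S → z = v ∨ s(v, z) ∈ p.edges)
    (hx : x ∈ p.support) (hxS : x ∉ S) :
    ReachableAvoiding G S x u ∨ ReachableAvoiding G S x w := by
  obtain ⟨k, rfl, hk⟩ := Walk.mem_support_iff_exists_getVert.mp hv
  obtain ⟨j, rfl, hj⟩ := Walk.mem_support_iff_exists_getVert.mp hx
  have near : ∀ l ≤ p.length, p.getVert l ∈ S → k ≤ l + 1 ∧ l ≤ k + 1 := by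
    intro l hl hlS
    rcases hS _ (p.getVert_mem_support l) hlS with h | h
    · have := hp.getVert_injOn (show l ≤ p.length from hl) (show k ≤ p.length from hk) h
      omega
    · have := index_eq_of_mem_edges hp hk hl h
      omega
  have hjk : j ≠ k := by rintro rfl; exact hxS hvS
  rcases lt_or_gt_of_ne hjk with hjk | hjk
  · left
    have h := reachableAvoiding_getVert p (Nat.zero_le j) fun l _ hlj hlS => by
      have := near l (hlj.trans hj) hlS
      exact hxS (by rwa [show j = l by omega])
    simpa using h.symm
  · right
    have h := reachableAvoiding_getVert p hj fun l hjl hl hlS => by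
      have := near l hl hlS
      exact hxS (by rwa [show j = l by omega])
    simpa using h

lemma reachableAvoiding_of_isCycle_of_base {c : G.Walk u u} (hc : c.IsCycle) (huS : u ∈ S)
    (hS : ∀ z ∈ c.support, z ∈ S → z = u ∨ s(u, z) ∈ c.edges)
    (hx : x ∈ c.support) (hxS : x ∉ S) (hy : y ∈ c.support) (hyS : y ∉ S) :
    ReachableAvoiding G S x y := by
  obtain ⟨i, rfl, hi⟩ := Walk.mem_support_iff_exists_getVert.mp hx
  obtain ⟨j, rfl, hj⟩ := Walk.mem_support_iff_exists_getVert.mp hy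
  clear hx hy
  wlog hij : i ≤ j generalizing i j
  · exact (this j hj hyS i hi hxS (by omega)).symm
  have h3 := hc.three_le_length
  have hi1 : 1 ≤ i := by
    by_contra h
    exact hxS (by rw [show i = 0 by omega, c.getVert_zero]; exact huS)
  have hj1 : j ≤ c.length - 1 := by
    by_contra h
    exact hyS (by rw [show j = c.length by omega, c.getVert_length]; exact huS)
  refine reachableAvoiding_getVert c hij fun l hil hlj hlS => ?_
  rcases hS _ (c.getVert_mem_support l) hlS with h | h
  · have := (hc.getVert_endpoint_iff (by omega)).mp h
    omega
  · have hnb : c.getVert l ∈ c.toSubgraph.neighborSet u := Walk.adj_toSubgraph_iff_mem_edges.mpr h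
    rw [hc.neighborSet_toSubgraph_endpoint] at hnb
    rcases hnb with h₁ | h₁
    · have : l = 1 := hc.getVert_injOn (show 1 ≤ l ∧ l ≤ c.length by omega)
        (show 1 ≤ 1 ∧ 1 ≤ c.length by omega) h₁
      exact hxS (by rwa [show i = l by omega])
    · have : l = c.length - 1 := hc.getVert_injOn' (show l ≤ c.length - 1 by omega)
        (show c.length - 1 ≤ c.length - 1 from le_rfl) h₁
      exact hyS (by rwa [show j = l by omega])

lemma reachableAvoiding_of_isCycle {r : V} {c : G.Walk r r} (hc : c.IsCycle)
    (hu : u ∈ c.support) (huS : u ∈ S)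
    (hS : ∀ z ∈ c.support, z ∈ S → z = u ∨ s(u, z) ∈ c.edges)
    (hx : x ∈ c.support) (hxS : x ∉ S) (hy : y ∈ c.support) (hyS : y ∉ S) :
    ReachableAvoiding G S x y := by
  classical
  have hmem z : z ∈ (c.rotate u hu).support ↔ z ∈ c.support := c.mem_support_rotate_iff u hu
  refine reachableAvoiding_of_isCycle_of_base (hc.rotate hu) huS (fun z hz hzS => ?_)
    ((hmem x).2 hx) hxS ((hmem y).2 hy) hyS
  exact (hS z ((hmem z).1 hz) hzS).imp_right (c.rotate_edges u hu).perm.mem_iff.2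

lemma exists_mem_support_notMem_of_isCycle {c : G.Walk u u} (hc : c.IsCycle) (T : Finset V)
    (hT : T.card < c.length) : ∃ x ∈ c.support, x ∉ T := by
  classical
  have hcard : c.support.tail.toFinset.card = c.length := by
    rw [List.toFinset_card_of_nodup hc.support_nodup, List.length_tail, Walk.length_support]
    rfl
  obtain ⟨x, hx, hxT⟩ := Finset.exists_mem_notMem_of_card_lt_card (hcard ▸ hT)
  exact ⟨x, List.mem_of_mem_tail (List.mem_toFinset.mp hx), hxT⟩

lemma ne_of_isPath_of_mem_support {p : G.Walk u w} (hp : p.IsPath) (hx : x ∈ p.support)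
    (hxu : x ≠ u) : u ≠ w := by
  rintro rfl
  rw [Walk.nil_iff_support_eq.mp (Walk.isPath_iff_nil.mp hp)] at hx
  exact hxu (List.mem_singleton.mp hx)

lemma mem_of_reachable_induce {s T : Set V}
    (hT : ∀ u w, u ∈ T → u ∈ s → w ∈ s → G.Adj u w → w ∈ T) {x y : s}
    (h : (G.induce s).Reachable x y) (hx : (x : V) ∈ T) : (y : V) ∈ T := by
  obtain ⟨p⟩ := h
  induction p with
  | nil => exact hx
  | cons hadj _ ih => exact ih (hT _ _ hx (Subtype.prop _) (Subtype.prop _) (induce_adj.mp hadj))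

end Avoiding

theorem ZMod.induction_from {m : ℕ} [NeZero m] {P : ZMod m → Prop} (s : ZMod m) (hs : P s)
    (hsucc : ∀ j, j + 1 ≠ s → P j → P (j + 1)) (j : ZMod m) : P j := by
  have key : ∀ n < m, P (s + n) := by
    intro n
    induction n with
    | zero => exact fun _ => by simpa using hs
    | succ n ih =>
      intro hn
      have hne : s + n + 1 ≠ s := by
        rw [add_assoc, add_ne_left]
        exact_mod_cast (ZMod.natCast_eq_zero_iff (n + 1) m).not.mpr
          (Nat.not_dvd_of_pos_of_lt (by omega) hn)
      simpa [add_assoc] using hsucc _ hne (ih (by omega))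
  simpa using key (j - s).val (ZMod.val_lt _)

namespace Necklace

variable {V : Type} {G : SimpleGraph V} {m : ℕ} (N : Necklace G m) {S : Set V}
  {u v w x y z : V} {e j k l : ZMod m}

def IsJunction (u : V) : Prop := ∃ j, u = N.a j ∨ u = N.b j

def IsPathEnd (k : ZMod m) (u : V) : Prop := u = N.b k ∨ u = N.a (k + 1)

lemma a_mem (j : ZMod m) : N.a j ∈ (N.B j).support := Walk.start_mem_support _

lemma isJunction_a (j : ZMod m) : N.IsJunction (N.a j) := ⟨j, .inl rfl⟩

lemma isJunction_b (j : ZMod m) : N.IsJunction (N.b j) := ⟨j, .inr rfl⟩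

lemma eq_a_or_eq_b_of_mem_bead (hj : x ∈ (N.B j).support) (hk : x ∈ (N.B k).support)
    (hjk : j ≠ k) : x = N.a k ∨ x = N.b k := by
  rcases N.bead_disjoint j k hjk x hj hk with ⟨-, -, h⟩ | ⟨-, h, -⟩
  exacts [.inl h, .inr h]

lemma isJunction_of_mem_bead_of_mem_bead (hj : x ∈ (N.B j).support)
    (hk : x ∈ (N.B k).support) (hjk : j ≠ k) : N.IsJunction x :=
  ⟨k, N.eq_a_or_eq_b_of_mem_bead hj hk hjk⟩

lemma isPathEnd_of_mem_path_of_mem_bead (hj : x ∈ (N.P j).support) (hk : x ∈ (N.B k).support) :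
    N.IsPathEnd j x :=
  N.path_bead_disjoint j k x hj hk

lemma isPathEnd_of_mem_path_of_mem_path (hj : x ∈ (N.P j).support) (hk : x ∈ (N.P k).support)
    (hjk : j ≠ k) : N.IsPathEnd j x :=
  (N.path_disjoint j k hjk x hj hk).1

lemma b_inj (h : N.b j = N.b k) : j = k := by
  by_contra hjk
  rcases N.bead_disjoint j k hjk _ (N.b_mem j) (by rw [h]; exact N.b_mem k) with
    ⟨-, -, h'⟩ | ⟨-, -, h'⟩
  exacts [N.ab_ne k (h'.symm.trans h), N.ab_ne j h'.symm]

lemma a_inj (h : N.a j = N.a k) : j = k := by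
  by_contra hjk
  rcases N.bead_disjoint j k hjk _ (N.a_mem j) (by rw [h]; exact N.a_mem k) with
    ⟨-, h', -⟩ | ⟨-, h', -⟩
  exacts [N.ab_ne j h', N.ab_ne k (h.symm.trans h')]

lemma eq_add_one_of_a_eq_b (h : N.a j = N.b k) : j = k + 1 := by
  rcases eq_or_ne j k with rfl | hjk
  · exact absurd h (N.ab_ne j)
  rcases N.bead_disjoint j k hjk _ (N.a_mem j) (by rw [h]; exact N.b_mem k) with
    ⟨-, h', -⟩ | ⟨h', -, -⟩
  exacts [absurd h' (N.ab_ne j), h']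

lemma isPathEnd_unique (hk : N.IsPathEnd k u) (hl : N.IsPathEnd l u) : k = l := by
  rcases hk with rfl | rfl <;> rcases hl with h | h
  · exact N.b_inj h
  · exact (add_right_cancel (N.eq_add_one_of_a_eq_b h.symm)).symm
  · exact add_right_cancel (N.eq_add_one_of_a_eq_b h)
  · exact add_right_cancel (N.a_inj h)

lemma mem_block_of_adj (h : G.Adj x y) :
    (∃ k, x ∈ (N.B k).support ∧ y ∈ (N.B k).support) ∨
      ∃ k, x ∈ (N.P k).support ∧ y ∈ (N.P k).support := by
  rcases N.cover_edge x y h with ⟨k, hk⟩ | ⟨k, hk⟩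
  · exact .inl ⟨k, Walk.fst_mem_support_of_mem_edges _ hk, Walk.snd_mem_support_of_mem_edges _ hk⟩
  · exact .inr ⟨k, Walk.fst_mem_support_of_mem_edges _ hk, Walk.snd_mem_support_of_mem_edges _ hk⟩

section Junction

variable {N}

lemma IsPathEnd.mem (h : N.IsPathEnd k u) : u ∈ (N.P k).support := by
  rcases h with rfl | rfl
  exacts [Walk.start_mem_support _, Walk.end_mem_support _]

lemma IsPathEnd.isJunction (h : N.IsPathEnd k u) : N.IsJunction u :=
  h.elim (fun h => ⟨k, .inr h⟩) fun h => ⟨k + 1, .inl h⟩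

lemma IsJunction.exists_mem_bead (h : N.IsJunction u) : ∃ j, u ∈ (N.B j).support := by
  obtain ⟨j, rfl | rfl⟩ := h
  exacts [⟨j, N.a_mem j⟩, ⟨j, N.b_mem j⟩]

lemma IsJunction.eq_of_mem_bead (h : N.IsJunction u) (hk : u ∈ (N.B k).support) :
    u = N.a k ∨ u = N.b k := by
  obtain ⟨j, hu⟩ := h
  rcases eq_or_ne j k with rfl | hjk
  · exact hu
  · rcases hu with rfl | rfl
    exacts [N.eq_a_or_eq_b_of_mem_bead (N.a_mem j) hk hjk,
      N.eq_a_or_eq_b_of_mem_bead (N.b_mem j) hk hjk]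

lemma IsJunction.isPathEnd_of_mem_path (h : N.IsJunction u) (hk : u ∈ (N.P k).support) :
    N.IsPathEnd k u :=
  let ⟨_, hj⟩ := h.exists_mem_bead
  N.isPathEnd_of_mem_path_of_mem_bead hk hj

lemma IsJunction.not_adj_of_mem_bead (hu : N.IsJunction u) (hw : N.IsJunction w)
    (huk : u ∈ (N.B k).support) (hwk : w ∈ (N.B k).support) : ¬ G.Adj u w := by
  rcases hu.eq_of_mem_bead huk with rfl | rfl <;> rcases hw.eq_of_mem_bead hwk with rfl | rfl
  exacts [G.irrefl, N.ab_nonadj k, fun h => N.ab_nonadj k h.symm, G.irrefl]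

lemma IsJunction.exists_isPathEnd_of_adj (hu : N.IsJunction u) (hw : N.IsJunction w)
    (h : G.Adj u w) : ∃ l, N.IsPathEnd l u ∧ N.IsPathEnd l w := by
  rcases N.mem_block_of_adj h with ⟨k, huk, hwk⟩ | ⟨k, huk, hwk⟩
  · exact absurd h (hu.not_adj_of_mem_bead hw huk hwk)
  · exact ⟨k, hu.isPathEnd_of_mem_path huk, hw.isPathEnd_of_mem_path hwk⟩

end Junction

lemma mem_edges_bead_of_adj (hx : x ∈ (N.B j).support) (hy : y ∈ (N.B j).support)
    (h : G.Adj x y) : s(x, y) ∈ (N.B j).edges := by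
  rcases N.cover_edge x y h with ⟨k, hk⟩ | ⟨k, hk⟩
  · rcases eq_or_ne k j with rfl | hkj
    · exact hk
    have hxJ := N.isJunction_of_mem_bead_of_mem_bead hx (Walk.fst_mem_support_of_mem_edges _ hk)
      hkj.symm
    have hyJ := N.isJunction_of_mem_bead_of_mem_bead hy (Walk.snd_mem_support_of_mem_edges _ hk)
      hkj.symm
    exact absurd h (hxJ.not_adj_of_mem_bead hyJ hx hy)
  · have hxk := Walk.fst_mem_support_of_mem_edges _ hk
    have hyk := Walk.snd_mem_support_of_mem_edges _ hk
    exact absurd h ((N.isPathEnd_of_mem_path_of_mem_bead hxk hx).isJunction.not_adj_of_mem_bead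
      (N.isPathEnd_of_mem_path_of_mem_bead hyk hy).isJunction hx hy)

lemma mem_edges_path_of_adj (hx : x ∈ (N.P j).support) (hy : y ∈ (N.P j).support)
    (h : G.Adj x y) : s(x, y) ∈ (N.P j).edges := by
  rcases N.cover_edge x y h with ⟨k, hk⟩ | ⟨k, hk⟩
  · have hxk := Walk.fst_mem_support_of_mem_edges _ hk
    have hyk := Walk.snd_mem_support_of_mem_edges _ hk
    exact absurd h ((N.isPathEnd_of_mem_path_of_mem_bead hx hxk).isJunction.not_adj_of_mem_bead
      (N.isPathEnd_of_mem_path_of_mem_bead hy hyk).isJunction hxk hyk)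
  · rcases eq_or_ne k j with rfl | hkj
    · exact hk
    have hxk := Walk.fst_mem_support_of_mem_edges _ hk
    exact absurd (N.isPathEnd_unique (N.isPathEnd_of_mem_path_of_mem_path hxk hx hkj)
      ((N.isPathEnd_of_mem_path_of_mem_path hx hxk hkj.symm))) hkj

lemma mem_bead_of_adj (hx : x ∈ (N.B e).support) (hxJ : ¬ N.IsJunction x) (h : G.Adj x y) :
    y ∈ (N.B e).support := by
  rcases N.mem_block_of_adj h with ⟨k, hxk, hyk⟩ | ⟨k, hxk, -⟩
  · rcases eq_or_ne k e with rfl | hke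
    · exact hyk
    · exact absurd (N.isJunction_of_mem_bead_of_mem_bead hx hxk hke.symm) hxJ
  · exact absurd (N.isPathEnd_of_mem_path_of_mem_bead hxk hx).isJunction hxJ

lemma mem_path_of_adj (hx : x ∈ (N.P e).support) (hxB : ∀ k, x ∉ (N.B k).support)
    (h : G.Adj x y) : y ∈ (N.P e).support := by
  rcases N.mem_block_of_adj h with ⟨k, hxk, -⟩ | ⟨k, hxk, hyk⟩
  · exact absurd hxk (hxB k)
  · rcases eq_or_ne k e with rfl | hke
    · exact hyk
    · obtain ⟨l, hl⟩ := (N.isPathEnd_of_mem_path_of_mem_path hxk hx hke).isJunction.exists_mem_bead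
      exact absurd hl (hxB l)

theorem hasStarCutset_of_short (hm : 2 ≤ m) {i : ZMod m} (hi : N.Short i) : HasStarCutset G := by
  classical
  have : Fact (1 < m) := ⟨hm⟩
  obtain ⟨w, hwa, hwb⟩ := hi
  obtain ⟨x, hxB, hxS⟩ := exists_mem_support_notMem_of_isCycle (N.B_cycle i)
    {N.a i, N.b i, w} (Finset.card_le_three.trans_lt (N.B_len i))
  obtain ⟨y, hyB, hyS⟩ := exists_mem_support_notMem_of_isCycle (N.B_cycle (i + 1))
    {N.a (i + 1), N.b (i + 1), w} (Finset.card_le_three.trans_lt (N.B_len (i + 1)))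
  have hyBi : y ∉ (N.B i).support := fun h => by
    rcases N.eq_a_or_eq_b_of_mem_bead h hyB (add_ne_left.mpr one_ne_zero).symm with rfl | rfl <;>
      simp at hyS
  refine ⟨w, {N.a i, N.b i, w}, by simp, ?_, fun hconn => hyBi ?_⟩
  · rintro u (rfl | rfl | rfl)
    exacts [.inr hwa.symm, .inr hwb.symm, .inl rfl]
  have hx : x ∈ ({N.a i, N.b i, w} : Set V)ᶜ := by simpa using hxS
  have hy : y ∈ ({N.a i, N.b i, w} : Set V)ᶜ := by
    rintro (rfl | rfl | rfl)
    exacts [hyBi (N.a_mem i), hyBi (N.b_mem i), hyS (by simp)]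
  refine mem_of_reachable_induce (T := {z | z ∈ (N.B i).support}) ?_ (hconn ⟨x, hx⟩ ⟨y, hy⟩) hxB
  intro u z hu huS _ huz
  refine N.mem_bead_of_adj hu (fun huJ => ?_) huz
  rcases huJ.eq_of_mem_bead hu with rfl | rfl <;> simp at huS

section Star

variable (hS : IsStar G S v) (hshort : ∀ i, ¬ N.Short i)
include hS

lemma b_notMem_of_a_mem (hj : ¬ N.Short j) (ha : N.a j ∈ S) : N.b j ∉ S := by
  intro hb
  by_cases hva : N.a j = v
  · exact N.ab_nonadj j (hva ▸ hS.adj hb (hva ▸ (N.ab_ne j).symm))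
  by_cases hvb : N.b j = v
  · exact N.ab_nonadj j (hvb ▸ hS.adj ha (hvb ▸ N.ab_ne j)).symm
  exact hj ⟨v, (hS.adj ha hva).symm, (hS.adj hb hvb).symm⟩

lemma eq_a_or_eq_b_of_mem_star (hv : v ∉ (N.B j).support) (hz : z ∈ (N.B j).support)
    (hzS : z ∈ S) : z = N.a j ∨ z = N.b j := by
  have hzv : z ≠ v := by rintro rfl; exact hv hz
  rcases N.mem_block_of_adj (hS.adj hzS hzv) with ⟨k, hvk, hzk⟩ | ⟨k, -, hzk⟩
  · exact N.eq_a_or_eq_b_of_mem_bead hzk hz (by rintro rfl; exact hv hvk)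
  · exact (N.isPathEnd_of_mem_path_of_mem_bead hzk hz).isJunction.eq_of_mem_bead hz

lemma isPathEnd_of_mem_star (hv : v ∉ (N.P j).support) (hz : z ∈ (N.P j).support)
    (hzS : z ∈ S) : N.IsPathEnd j z := by
  have hzv : z ≠ v := by rintro rfl; exact hv hz
  rcases N.mem_block_of_adj (hS.adj hzS hzv) with ⟨k, -, hzk⟩ | ⟨k, hvk, hzk⟩
  · exact N.isPathEnd_of_mem_path_of_mem_bead hz hzk
  · exact N.isPathEnd_of_mem_path_of_mem_path hz hzk (by rintro rfl; exact hv hvk)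

lemma mem_bead_of_mem_star (hv : v ∈ (N.B e).support) (hvJ : ¬ N.IsJunction v) (hz : z ∈ S) :
    z ∈ (N.B e).support :=
  (hS.2 z hz).elim (· ▸ hv) (N.mem_bead_of_adj hv hvJ)

lemma mem_path_of_mem_star (hv : v ∈ (N.P e).support) (hvB : ∀ k, v ∉ (N.B k).support)
    (hz : z ∈ S) : z ∈ (N.P e).support :=
  (hS.2 z hz).elim (· ▸ hv) (N.mem_path_of_adj hv hvB)

include hshort

lemma reachableAvoiding_of_mem_bead (hx : x ∈ (N.B j).support) (hxS : x ∉ S)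
    (hy : y ∈ (N.B j).support) (hyS : y ∉ S) : ReachableAvoiding G S x y := by
  by_cases hv : v ∈ (N.B j).support
  · exact reachableAvoiding_of_isCycle (N.B_cycle j) hv hS.1
      (fun z hz hzS => (hS.2 z hzS).imp_right (N.mem_edges_bead_of_adj hv hz)) hx hxS hy hyS
  have hSB z (hz : z ∈ (N.B j).support) (hzS : z ∈ S) := N.eq_a_or_eq_b_of_mem_star hS hv hz hzS
  by_cases ha : N.a j ∈ S
  · refine reachableAvoiding_of_isCycle (N.B_cycle j) (N.a_mem j) ha
      (fun z hz hzS => .inl ?_) hx hxS hy hyS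
    exact (hSB _ hz hzS).resolve_right fun h => N.b_notMem_of_a_mem hS (hshort j) ha (h ▸ hzS)
  by_cases hb : N.b j ∈ S
  · refine reachableAvoiding_of_isCycle (N.B_cycle j) (N.b_mem j) hb
      (fun z hz hzS => .inl ?_) hx hxS hy hyS
    exact (hSB _ hz hzS).resolve_left fun h => ha (h ▸ hzS)
  refine reachableAvoiding_of_mem_support (N.B j) (fun z hz hzS => ?_) hx hy
  rcases hSB _ hz hzS with rfl | rfl
  exacts [ha hzS, hb hzS]

lemma a_succ_notMem_of_b_mem (hv : v ∉ (N.P j).support) (hx : x ∈ (N.P j).support)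
    (hxS : x ∉ S) (hb : N.b j ∈ S) : N.a (j + 1) ∉ S := by
  intro ha
  have hne : N.b j ≠ N.a (j + 1) :=
    ne_of_isPath_of_mem_support (N.P_path j) hx fun h => hxS (h ▸ hb)
  by_cases hvJ : N.IsJunction v
  · have hbv : N.b j ≠ v := by rintro rfl; exact hv (Walk.start_mem_support _)
    obtain ⟨l, hvl, hbl⟩ := hvJ.exists_isPathEnd_of_adj (N.isJunction_b j) (hS.adj hb hbv)
    exact hv (N.isPathEnd_unique hbl (.inl rfl) ▸ hvl).mem
  by_cases hvB : ∃ e, v ∈ (N.B e).support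
  · obtain ⟨e, hve⟩ := hvB
    have hb' := (N.isJunction_b j).eq_of_mem_bead (N.mem_bead_of_mem_star hS hve hvJ hb)
    have ha' := (N.isJunction_a (j + 1)).eq_of_mem_bead (N.mem_bead_of_mem_star hS hve hvJ ha)
    rcases hb' with h₁ | h₁ <;> rcases ha' with h₂ | h₂
    · exact hne (h₁.trans h₂.symm)
    · exact N.b_notMem_of_a_mem hS (hshort e) (h₁ ▸ hb) (h₂ ▸ ha)
    · exact N.b_notMem_of_a_mem hS (hshort e) (h₂ ▸ ha) (h₁ ▸ hb)
    · exact hne (h₁.trans h₂.symm)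
  obtain ⟨e, hve⟩ := (N.cover_vertex v).resolve_left hvB
  rw [not_exists] at hvB
  have hbe := (N.isJunction_b j).isPathEnd_of_mem_path (N.mem_path_of_mem_star hS hve hvB hb)
  exact hv (N.isPathEnd_unique hbe (.inl rfl) ▸ hve)

lemma reachableAvoiding_end_of_mem_path (hx : x ∈ (N.P j).support) (hxS : x ∉ S) :
    ReachableAvoiding G S x (N.b j) ∨ ReachableAvoiding G S x (N.a (j + 1)) := by
  by_cases hv : v ∈ (N.P j).support
  · exact reachableAvoiding_ends_of_isPath (N.P_path j) hv hS.1
      (fun z hz hzS => (hS.2 z hzS).imp_right (N.mem_edges_path_of_adj hv hz)) hx hxS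
  have hSP z (hz : z ∈ (N.P j).support) (hzS : z ∈ S) := N.isPathEnd_of_mem_star hS hv hz hzS
  by_cases hb : N.b j ∈ S
  · refine reachableAvoiding_ends_of_isPath (N.P_path j) (Walk.start_mem_support _) hb
      (fun z hz hzS => .inl ?_) hx hxS
    exact (hSP _ hz hzS).resolve_right fun h =>
      N.a_succ_notMem_of_b_mem hS hshort hv hx hxS hb (h ▸ hzS)
  by_cases ha : N.a (j + 1) ∈ S
  · refine reachableAvoiding_ends_of_isPath (N.P_path j) (Walk.end_mem_support _) ha
      (fun z hz hzS => .inl ?_) hx hxS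
    exact (hSP _ hz hzS).resolve_left fun h => hb (h ▸ hzS)
  refine .inl (reachableAvoiding_of_mem_support (N.P j) (fun z hz hzS => ?_) hx
    (Walk.start_mem_support _))
  rcases hSP _ hz hzS with rfl | rfl
  exacts [hb hzS, ha hzS]

lemma exists_reachableAvoiding_junction (hxS : x ∉ S) :
    ∃ u, N.IsJunction u ∧ ReachableAvoiding G S x u := by
  rcases N.cover_vertex x with ⟨j, hx⟩ | ⟨j, hx⟩
  · by_cases ha : N.a j ∈ S
    · have hb : N.b j ∉ S := N.b_notMem_of_a_mem hS (hshort j) ha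
      exact ⟨_, N.isJunction_b j, N.reachableAvoiding_of_mem_bead hS hshort hx hxS (N.b_mem j) hb⟩
    · exact ⟨_, N.isJunction_a j, N.reachableAvoiding_of_mem_bead hS hshort hx hxS (N.a_mem j) ha⟩
  · rcases N.reachableAvoiding_end_of_mem_path hS hshort hx hxS with h | h
    exacts [⟨_, N.isJunction_b j, h⟩, ⟨_, N.isJunction_a (j + 1), h⟩]

end Star

def IsGap (S : Set V) (v : V) (e : ZMod m) : Prop :=
  (∀ u ∈ S, N.IsJunction u → N.IsPathEnd e u) ∧ ∀ j, v ∈ (N.P j).support → j = e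

lemma IsGap.eq_of_a_mem {N : Necklace G m} (h : N.IsGap S v e) (ha : N.a j ∈ S) : j = e + 1 := by
  rcases h.1 _ ha (N.isJunction_a j) with h' | h'
  exacts [N.eq_add_one_of_a_eq_b h', N.a_inj h']

lemma IsGap.eq_of_b_mem {N : Necklace G m} (h : N.IsGap S v e) (hb : N.b j ∈ S) : j = e := by
  rcases h.1 _ hb (N.isJunction_b j) with h' | h'
  exacts [N.b_inj h', (add_right_cancel (N.eq_add_one_of_a_eq_b h'.symm)).symm]

section Gap

variable (hS : IsStar G S v) (hshort : ∀ i, ¬ N.Short i)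
include hS

lemma isGap_of_isPathEnd (he : N.IsPathEnd e v) : N.IsGap S v e := by
  refine ⟨fun u hu huJ => ?_, fun j hj =>
    N.isPathEnd_unique (he.isJunction.isPathEnd_of_mem_path hj) he⟩
  by_cases huv : u = v
  · exact huv ▸ he
  obtain ⟨l, hvl, hul⟩ := he.isJunction.exists_isPathEnd_of_adj huJ (hS.adj hu huv)
  exact N.isPathEnd_unique hvl he ▸ hul

lemma reachableAvoiding_path_of_isGap (hgap : N.IsGap S v e) (hje : j ≠ e) :
    ReachableAvoiding G S (N.b j) (N.a (j + 1)) := by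
  refine reachableAvoiding_of_mem_support (N.P j) (fun z hz hzS => ?_) (Walk.start_mem_support _)
    (Walk.end_mem_support _)
  rcases N.isPathEnd_of_mem_star hS (fun h => hje (hgap.2 j h)) hz hzS with rfl | rfl
  exacts [hje (hgap.eq_of_b_mem hzS), hje (add_right_cancel (hgap.eq_of_a_mem hzS))]

include hshort

lemma exists_isGap : ∃ e, N.IsGap S v e := by
  by_cases hvJ : N.IsJunction v
  · obtain ⟨j, rfl | rfl⟩ := hvJ
    exacts [⟨j - 1, N.isGap_of_isPathEnd hS (.inr (by rw [sub_add_cancel]))⟩,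
      ⟨j, N.isGap_of_isPathEnd hS (.inl rfl)⟩]
  by_cases hvB : ∃ e, v ∈ (N.B e).support
  · obtain ⟨e, hve⟩ := hvB
    have hvP j (hj : v ∈ (N.P j).support) : False :=
      hvJ (N.isPathEnd_of_mem_path_of_mem_bead hj hve).isJunction
    by_cases hb : N.b e ∈ S
    · refine ⟨e, fun u hu huJ => ?_, fun j hj => (hvP j hj).elim⟩
      rcases huJ.eq_of_mem_bead (N.mem_bead_of_mem_star hS hve hvJ hu) with rfl | rfl
      exacts [(N.b_notMem_of_a_mem hS (hshort e) hu hb).elim, .inl rfl]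
    · refine ⟨e - 1, fun u hu huJ => ?_, fun j hj => (hvP j hj).elim⟩
      rcases huJ.eq_of_mem_bead (N.mem_bead_of_mem_star hS hve hvJ hu) with rfl | rfl
      exacts [.inr (by rw [sub_add_cancel]), absurd hu hb]
  obtain ⟨e, hve⟩ := (N.cover_vertex v).resolve_left hvB
  rw [not_exists] at hvB
  refine ⟨e, fun u hu huJ => huJ.isPathEnd_of_mem_path (N.mem_path_of_mem_star hS hve hvB hu),
    fun j hj => ?_⟩
  by_contra hje
  obtain ⟨k, hk⟩ := (N.isPathEnd_of_mem_path_of_mem_path hj hve hje).isJunction.exists_mem_bead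
  exact hvB k hk

lemma reachableAvoiding_junction_of_isGap (hm : 2 ≤ m) (hgap : N.IsGap S v e)
    (hu : N.IsJunction u) (huS : u ∉ S) : ReachableAvoiding G S u (N.b (e + 1)) := by
  have : Fact (1 < m) := ⟨hm⟩
  have hτ : N.b (e + 1) ∉ S := fun h => add_ne_left.mpr one_ne_zero (hgap.eq_of_b_mem h)
  have bead j (ha : N.a j ∉ S) (hb : N.b j ∉ S) : ReachableAvoiding G S (N.a j) (N.b j) :=
    N.reachableAvoiding_of_mem_bead hS hshort (N.a_mem j) ha (N.b_mem j) hb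
  suffices key : ∀ j, (N.a j ∉ S → ReachableAvoiding G S (N.a j) (N.b (e + 1))) ∧
      (N.b j ∉ S → ReachableAvoiding G S (N.b j) (N.b (e + 1))) by
    obtain ⟨j, rfl | rfl⟩ := hu
    exacts [(key j).1 huS, (key j).2 huS]
  refine ZMod.induction_from (e + 1) ⟨fun ha => bead _ ha hτ, fun _ => .refl hτ⟩
    fun j hj ih => ?_
  have hpath := N.reachableAvoiding_path_of_isGap hS hgap (j := j) (by rintro rfl; exact hj rfl)
  have hlink := hpath.symm.trans (ih.2 hpath.1)
  exact ⟨fun _ => hlink, fun hb => (bead _ hpath.notMem_right hb).symm.trans hlink⟩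

theorem preconnected_induce_compl (hm : 2 ≤ m) : (G.induce Sᶜ).Preconnected := by
  obtain ⟨e, hgap⟩ := N.exists_isGap hS hshort
  have reach x (hx : x ∉ S) : ReachableAvoiding G S x (N.b (e + 1)) :=
    let ⟨_, hu, hxu⟩ := N.exists_reachableAvoiding_junction hS hshort hx
    hxu.trans (N.reachableAvoiding_junction_of_isGap hS hshort hm hgap hu hxu.notMem_right)
  rintro ⟨x, hx⟩ ⟨y, hy⟩
  exact ((reach x hx).trans (reach y hy).symm).2.2

end Gap

end Necklace

/-- A necklace graph has a star cutset iff it has a short bead. -/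
theorem necklace_starCutset_iff_shortBead (V : Type) (G : SimpleGraph V) (m : ℕ)
    (hm : 2 ≤ m) (N : Necklace G m) :
    HasStarCutset G ↔ ∃ i, N.Short i := by
  refine ⟨fun ⟨v, S, hvS, hstar, hcut⟩ => ?_, fun ⟨i, hi⟩ => N.hasStarCutset_of_short hm hi⟩
  by_contra! hshort
  exact hcut (N.preconnected_induce_compl ⟨hvS, hstar⟩ hshort hm)

end BurlingFormal
end

section
/- Let G be a graph obtained from K_4 by subdividing edges, such that G contains no wheel as an induced subgraph (equivalently, G satisfies the Burling condition of having four degree-3 vertices a,b,c,d with ab, ac ∈ E(G) and ad, bc ∉ E(G)). Then, up to symmetry of K_4, the set of edges of K_4 that are properly subdivided is determined by its cardinality, and this cardinality is 2, 3, or 4. -/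
namespace BurlingFormal

open SimpleGraph

/-- The number of properly subdivided edges of a subdivision of `K₄` encoded by its
length function `ℓ`. -/
def numSub4 (ℓ : Fin 4 → Fin 4 → ℕ) : ℕ :=
  (Finset.univ.filter (fun p : Fin 4 × Fin 4 => p.1 < p.2 ∧ 2 ≤ ℓ p.1 p.2)).card

/-- The Burling condition for a subdivision of `K₄` encoded by its length function. -/
def BurlingCondition4 (ℓ : Fin 4 → Fin 4 → ℕ) : Prop :=
  ∃ a b c d : Fin 4, a ≠ b ∧ a ≠ c ∧ a ≠ d ∧ b ≠ c ∧ b ≠ d ∧ c ≠ d ∧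
    ℓ a b = 1 ∧ ℓ a c = 1 ∧ 2 ≤ ℓ a d ∧ 2 ≤ ℓ b c

/-! The Burling condition fixes four of the six edges: in a labelling `a, b, c, d`, the edges
`ab`, `ac` are not subdivided while `ad`, `bc` are. Only `bd` and `cd` are free, and the symmetry
`b ↔ c` exchanges them, so up to relabelling the properly subdivided edges form one of the three
nested sets `{ad, bc} ⊂ {ad, bc, bd} ⊂ {ad, bc, bd, cd}`. -/

open Finset

section EdgeCount

variable {V : Type*} [Fintype V] [LinearOrder V]

theorem card_filter_lt_adj_eq_card_edgeSet (G : SimpleGraph V) [DecidableRel G.Adj] :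
    #{p : V × V | p.1 < p.2 ∧ G.Adj p.1 p.2} = Nat.card G.edgeSet := by
  rw [Nat.card_eq_fintype_card, ← edgeFinset_card]
  refine card_bij (fun p _ ↦ s(p.1, p.2)) (fun p hp ↦ by simpa using (mem_filter.1 hp).2.2) ?_ ?_
  · rintro ⟨a, b⟩ hab ⟨c, d⟩ hcd he
    simp only [mem_filter, mem_univ, true_and] at hab hcd
    rcases Sym2.eq_iff.1 he with ⟨rfl, rfl⟩ | ⟨rfl, rfl⟩
    · rfl
    · exact absurd (hab.1.trans hcd.1) (lt_irrefl _)
  · intro e he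
    induction e using Sym2.ind with
    | _ a b =>
      rw [mem_edgeFinset, mem_edgeSet] at he
      rcases he.ne.lt_or_gt with h | h
      · exact ⟨(a, b), by simp [h, he], rfl⟩
      · exact ⟨(b, a), by simp [h, he.symm], Sym2.eq_swap⟩

end EdgeCount

def subdividedEdgesGraph (ℓ : Fin 4 → Fin 4 → ℕ) : SimpleGraph (Fin 4) :=
  SimpleGraph.fromRel fun i j ↦ 2 ≤ ℓ i j

section SubdividedEdgesGraph

variable {ℓ ℓ' : Fin 4 → Fin 4 → ℕ}

theorem subdividedEdgesGraph_adj (hs : ∀ i j, ℓ i j = ℓ j i) {i j : Fin 4} :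
    (subdividedEdgesGraph ℓ).Adj i j ↔ i ≠ j ∧ 2 ≤ ℓ i j := by
  simp [subdividedEdgesGraph, hs j i]

theorem numSub4_eq_card_edgeSet (hs : ∀ i j, ℓ i j = ℓ j i) :
    numSub4 ℓ = Nat.card (subdividedEdgesGraph ℓ).edgeSet := by
  classical
  rw [← card_filter_lt_adj_eq_card_edgeSet, numSub4]
  congr 1
  refine filter_congr fun p _ ↦ ?_
  rw [subdividedEdgesGraph_adj hs]
  exact ⟨fun h ↦ ⟨h.1, h.1.ne, h.2⟩, fun h ↦ ⟨h.1, h.2.2⟩⟩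

theorem numSub4_eq_of_iso (hs : ∀ i j, ℓ i j = ℓ j i) (hs' : ∀ i j, ℓ' i j = ℓ' j i)
    (e : subdividedEdgesGraph ℓ ≃g subdividedEdgesGraph ℓ') : numSub4 ℓ = numSub4 ℓ' := by
  rw [numSub4_eq_card_edgeSet hs, numSub4_eq_card_edgeSet hs', Nat.card_congr e.mapEdgeSet]

def subdividedEdgesGraphRelabelIso (ℓ : Fin 4 → Fin 4 → ℕ) (τ : Equiv.Perm (Fin 4)) :
    subdividedEdgesGraph (fun i j ↦ ℓ (τ i) (τ j)) ≃g subdividedEdgesGraph ℓ where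
  toEquiv := τ
  map_rel_iff' := by simp [subdividedEdgesGraph, τ.injective.ne_iff]

end SubdividedEdgesGraph

/-- The listed edges are `ad, bc, bd, cd` in the labelling `a, b, c, d = 0, 1, 2, 3`. -/
def modelLength (k : ℕ) (i j : Fin 4) : ℕ :=
  if s(i, j) ∈ [s(0, 3), s(1, 2), s(1, 3), s(2, 3)].take k then 2 else 1

theorem modelLength_symm (k : ℕ) (i j : Fin 4) : modelLength k i j = modelLength k j i := by
  simp [modelLength, Sym2.eq_swap]

theorem numSub4_modelLength {k : ℕ} (hk : k = 2 ∨ k = 3 ∨ k = 4) :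
    numSub4 (modelLength k) = k := by
  rcases hk with rfl | rfl | rfl <;> decide

theorem exists_perm_of_distinct {a b c d : Fin 4} (hab : a ≠ b) (hac : a ≠ c) (had : a ≠ d)
    (hbc : b ≠ c) (hbd : b ≠ d) (hcd : c ≠ d) :
    ∃ τ : Equiv.Perm (Fin 4), τ 0 = a ∧ τ 1 = b ∧ τ 2 = c ∧ τ 3 = d := by
  have hinj : Function.Injective ![a, b, c, d] := by
    intro i j h
    fin_cases i <;> fin_cases j <;> simp_all [eq_comm]
  exact ⟨Equiv.ofBijective _ (Finite.injective_iff_bijective.1 hinj), rfl, rfl, rfl, rfl⟩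

theorem BurlingCondition4.exists_perm {ℓ : Fin 4 → Fin 4 → ℕ} (hB : BurlingCondition4 ℓ)
    (hs : ∀ i j, ℓ i j = ℓ j i) :
    ∃ τ : Equiv.Perm (Fin 4), ℓ (τ 0) (τ 1) = 1 ∧ ℓ (τ 0) (τ 2) = 1 ∧ 2 ≤ ℓ (τ 0) (τ 3) ∧
      2 ≤ ℓ (τ 1) (τ 2) ∧ (2 ≤ ℓ (τ 2) (τ 3) → 2 ≤ ℓ (τ 1) (τ 3)) := by
  obtain ⟨a, b, c, d, hab, hac, had, hbc, hbd, hcd, hab₁, hac₁, had₂, hbc₂⟩ := hB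
  by_cases hbd₂ : 2 ≤ ℓ b d
  · obtain ⟨τ, rfl, rfl, rfl, rfl⟩ := exists_perm_of_distinct hab hac had hbc hbd hcd
    exact ⟨τ, hab₁, hac₁, had₂, hbc₂, fun _ ↦ hbd₂⟩
  · obtain ⟨τ, rfl, rfl, rfl, rfl⟩ := exists_perm_of_distinct hac hab had hbc.symm hcd hbd
    exact ⟨τ, hac₁, hab₁, had₂, hs _ _ ▸ hbc₂, fun h ↦ absurd h hbd₂⟩

theorem subdividedEdgesGraph_eq_model {ℓ : Fin 4 → Fin 4 → ℕ} (hs : ∀ i j, ℓ i j = ℓ j i)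
    (h01 : ℓ 0 1 = 1) (h02 : ℓ 0 2 = 1) (h03 : 2 ≤ ℓ 0 3) (h12 : 2 ≤ ℓ 1 2)
    (h23 : 2 ≤ ℓ 2 3 → 2 ≤ ℓ 1 3) :
    ∃ k, (k = 2 ∨ k = 3 ∨ k = 4) ∧
      subdividedEdgesGraph ℓ = subdividedEdgesGraph (modelLength k) := by
  obtain ⟨k, hk, h13, h23⟩ : ∃ k, (k = 2 ∨ k = 3 ∨ k = 4) ∧
      (2 ≤ ℓ 1 3 ↔ 3 ≤ k) ∧ (2 ≤ ℓ 2 3 ↔ 4 ≤ k) := by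
    by_cases h13 : 2 ≤ ℓ 1 3 <;> by_cases h23' : 2 ≤ ℓ 2 3
    exacts [⟨4, by simp [*]⟩, ⟨3, by simp [*]⟩, absurd (h23 h23') h13, ⟨2, by simp [*]⟩]
  refine ⟨k, hk, ?_⟩
  ext i j
  rw [subdividedEdgesGraph_adj hs, subdividedEdgesGraph_adj (modelLength_symm k)]
  rcases hk with rfl | rfl | rfl <;> fin_cases i <;> fin_cases j <;>
    simp [modelLength, hs 1 0, hs 2 0, hs 3 0, hs 2 1, hs 3 1, hs 3 2, *]

theorem BurlingCondition4.exists_iso_model {ℓ : Fin 4 → Fin 4 → ℕ} (hB : BurlingCondition4 ℓ)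
    (hs : ∀ i j, ℓ i j = ℓ j i) : ∃ k, (k = 2 ∨ k = 3 ∨ k = 4) ∧
      Nonempty (subdividedEdgesGraph ℓ ≃g subdividedEdgesGraph (modelLength k)) := by
  obtain ⟨τ, h01, h02, h03, h12, h23⟩ := hB.exists_perm hs
  obtain ⟨k, hk, hmodel⟩ :=
    subdividedEdgesGraph_eq_model (fun i j ↦ hs (τ i) (τ j)) h01 h02 h03 h12 h23
  refine ⟨k, hk, ⟨?_⟩⟩
  rw [← hmodel]
  exact (subdividedEdgesGraphRelabelIso ℓ τ).symm

theorem K4_subdivision_types_general (ℓ ℓ' : Fin 4 → Fin 4 → ℕ)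
    (hs : ∀ i j, ℓ i j = ℓ j i) (hB : BurlingCondition4 ℓ)
    (hs' : ∀ i j, ℓ' i j = ℓ' j i)
    (hB' : BurlingCondition4 ℓ') :
    (numSub4 ℓ = 2 ∨ numSub4 ℓ = 3 ∨ numSub4 ℓ = 4) ∧
    (numSub4 ℓ = numSub4 ℓ' → ∃ σ : Equiv.Perm (Fin 4), ∀ i j, i ≠ j →
      (2 ≤ ℓ i j ↔ 2 ≤ ℓ' (σ i) (σ j))) := by
  obtain ⟨k, hk, ⟨e⟩⟩ := hB.exists_iso_model hs
  obtain ⟨k', hk', ⟨e'⟩⟩ := hB'.exists_iso_model hs'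
  have hn : numSub4 ℓ = k :=
    (numSub4_eq_of_iso hs (modelLength_symm k) e).trans (numSub4_modelLength hk)
  have hn' : numSub4 ℓ' = k' :=
    (numSub4_eq_of_iso hs' (modelLength_symm k') e').trans (numSub4_modelLength hk')
  refine ⟨hn ▸ hk, fun h ↦ ?_⟩
  obtain rfl : k = k' := hn.symm.trans (h.trans hn')
  let φ : subdividedEdgesGraph ℓ ≃g subdividedEdgesGraph ℓ' := e.trans e'.symm
  refine ⟨φ.toEquiv, fun i j hij ↦ ?_⟩
  have hσ := φ.map_adj_iff (v := i) (w := j)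
  rw [subdividedEdgesGraph_adj hs, subdividedEdgesGraph_adj hs'] at hσ
  simpa [hij] using hσ.symm

/-- for Burling-admissible subdivisions of `K₄`, the set of properly subdivided
edges has cardinality 2, 3 or 4 and is determined by this cardinality up to symmetry of `K₄`. -/
theorem K4_subdivision_types (ℓ ℓ' : Fin 4 → Fin 4 → ℕ)
    (hs : ∀ i j, ℓ i j = ℓ j i) (hp : ∀ i j, i ≠ j → 1 ≤ ℓ i j) (hB : BurlingCondition4 ℓ)
    (hs' : ∀ i j, ℓ' i j = ℓ' j i) (hp' : ∀ i j, i ≠ j → 1 ≤ ℓ' i j)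
    (hB' : BurlingCondition4 ℓ') :
    (numSub4 ℓ = 2 ∨ numSub4 ℓ = 3 ∨ numSub4 ℓ = 4) ∧
    (numSub4 ℓ = numSub4 ℓ' → ∃ σ : Equiv.Perm (Fin 4), ∀ i j, i ≠ j →
      (2 ≤ ℓ i j ↔ 2 ≤ ℓ' (σ i) (σ j))) :=
  K4_subdivision_types_general ℓ ℓ' hs hB hs' hB'

end BurlingFormal
end

section
/- Let G be a triangle-free subdivision of K_5 in which every induced subdivision of K_4 contains four vertices a,b,c,d of degree 3 in that subdivision with ab, ac edges and ad, bc non-edges. Then either (Type A) there is a 4-cycle among the five branch vertices of G whose edges are not subdivided at all while every other edge of K_5 is subdivided at least once, or (Type B) there is a 5-cycle among the five branch vertices whose edges are not subdivided while every other edge of K_5 is subdivided at least once. -/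
namespace BurlingFormal

open SimpleGraph

/-- Index of the unordered pair `{i,j}` of elements of `Fin 5` among the 10 pairs. -/
def pidxN (i j : ℕ) : ℕ :=
  if i < j then i * 4 - i * (i - 1) / 2 + (j - i - 1) else j * 4 - j * (j - 1) / 2 + (i - j - 1)

lemma pidxN_symm (i j : ℕ) : pidxN i j = pidxN j i := by
  rcases lt_trichotomy i j with h|h|h
  · rw [pidxN, pidxN, if_pos h, if_neg (by omega)]
  · subst h; rfl
  · rw [pidxN, pidxN, if_neg (by omega), if_pos h]

/-- Bit `pidxN i j` of the nat `n` encoding which edges are long. -/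
def eb (n i j : ℕ) : Bool := n.testBit (pidxN i j)

set_option maxRecDepth 20000 in
lemma bits_key (b0 b1 b2 b3 b4 b5 b6 b7 b8 b9 : Bool) : ∀ k < 10,
    Nat.testBit (b0.toNat + 2*b1.toNat + 4*b2.toNat + 8*b3.toNat + 16*b4.toNat + 32*b5.toNat
      + 64*b6.toNat + 128*b7.toNat + 256*b8.toNat + 512*b9.toNat) k
    = [b0,b1,b2,b3,b4,b5,b6,b7,b8,b9].getD k false := by
  revert b0 b1 b2 b3 b4 b5 b6 b7 b8 b9; decide

set_option maxHeartbeats 16000000 in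
set_option maxRecDepth 20000 in
set_option synthInstance.maxHeartbeats 2000000 in
set_option synthInstance.maxSize 5000 in
lemma auxK5 : ∀ n < 1024,
    (∀ i < 5, ∀ j < i, ∀ k < j, eb n i j = true ∨ eb n j k = true ∨ eb n i k = true) →
    (∀ x < 5, ∃ a < 5, a ≠ x ∧ ∃ c < 5, c ≠ x ∧ a ≠ c ∧ eb n a c = false ∧
      ∃ d < 5, d ≠ x ∧ a ≠ d ∧ c ≠ d ∧ eb n a d = false ∧ eb n c d = true ∧
      ∃ e < 5, e ≠ x ∧ a ≠ e ∧ c ≠ e ∧ d ≠ e ∧ eb n a e = true) →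
    ((∃ a < 5, ∃ c < 5, a ≠ c ∧ eb n a c = false ∧
      ∃ d < 5, a ≠ d ∧ c ≠ d ∧ eb n c d = false ∧ eb n a d = true ∧
      ∃ e < 5, a ≠ e ∧ c ≠ e ∧ d ≠ e ∧ eb n d e = false ∧ eb n e a = false ∧ eb n c e = true ∧
      ∃ f < 5, a ≠ f ∧ c ≠ f ∧ d ≠ f ∧ e ≠ f ∧
        eb n a f = true ∧ eb n c f = true ∧ eb n d f = true ∧ eb n e f = true) ∨
    (∃ a < 5, ∃ c < 5, a ≠ c ∧ eb n a c = false ∧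
      ∃ d < 5, a ≠ d ∧ c ≠ d ∧ eb n c d = false ∧ eb n a d = true ∧
      ∃ e < 5, a ≠ e ∧ c ≠ e ∧ d ≠ e ∧ eb n d e = false ∧ eb n a e = true ∧ eb n c e = true ∧
      ∃ f < 5, a ≠ f ∧ c ≠ f ∧ d ≠ f ∧ e ≠ f ∧
        eb n e f = false ∧ eb n f a = false ∧ eb n c f = true ∧ eb n d f = true)) := by decide

/-- a triangle-free subdivision of `K₅` (encoded by a length function on the
edges) all of whose induced `K₄`-subdivisions satisfy the Burling condition is of
Type A or of Type B. -/
theorem K5_subdivision_typeAB (ℓ : Fin 5 → Fin 5 → ℕ)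
    (hs : ∀ i j, ℓ i j = ℓ j i) (hp : ∀ i j, i ≠ j → 1 ≤ ℓ i j)
    (htf : ∀ i j k : Fin 5, i ≠ j → j ≠ k → i ≠ k → 2 ≤ ℓ i j ∨ 2 ≤ ℓ j k ∨ 2 ≤ ℓ i k)
    (hK4 : ∀ x : Fin 5, ∃ a b c d : Fin 5, a ≠ x ∧ b ≠ x ∧ c ≠ x ∧ d ≠ x ∧
      a ≠ b ∧ a ≠ c ∧ a ≠ d ∧ b ≠ c ∧ b ≠ d ∧ c ≠ d ∧
      ℓ a b = 1 ∧ ℓ a c = 1 ∧ 2 ≤ ℓ a d ∧ 2 ≤ ℓ b c) :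
    (∃ a b c d e : Fin 5, (a ≠ b ∧ a ≠ c ∧ a ≠ d ∧ a ≠ e ∧ b ≠ c ∧ b ≠ d ∧ b ≠ e ∧ c ≠ d ∧ c ≠ e ∧ d ≠ e) ∧
      ℓ a b = 1 ∧ ℓ b c = 1 ∧ ℓ c d = 1 ∧ ℓ d a = 1 ∧
      2 ≤ ℓ a c ∧ 2 ≤ ℓ b d ∧ 2 ≤ ℓ a e ∧ 2 ≤ ℓ b e ∧ 2 ≤ ℓ c e ∧ 2 ≤ ℓ d e) ∨
    (∃ a b c d e : Fin 5, (a ≠ b ∧ a ≠ c ∧ a ≠ d ∧ a ≠ e ∧ b ≠ c ∧ b ≠ d ∧ b ≠ e ∧ c ≠ d ∧ c ≠ e ∧ d ≠ e) ∧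
      ℓ a b = 1 ∧ ℓ b c = 1 ∧ ℓ c d = 1 ∧ ℓ d e = 1 ∧ ℓ e a = 1 ∧
      2 ≤ ℓ a c ∧ 2 ≤ ℓ a d ∧ 2 ≤ ℓ b d ∧ 2 ≤ ℓ b e ∧ 2 ≤ ℓ c e) := by
  obtain ⟨N, hNdef⟩ : ∃ N : ℕ, N = (decide (2 ≤ ℓ 0 1)).toNat + 2*(decide (2 ≤ ℓ 0 2)).toNat
      + 4*(decide (2 ≤ ℓ 0 3)).toNat + 8*(decide (2 ≤ ℓ 0 4)).toNat + 16*(decide (2 ≤ ℓ 1 2)).toNat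
      + 32*(decide (2 ≤ ℓ 1 3)).toNat + 64*(decide (2 ≤ ℓ 1 4)).toNat + 128*(decide (2 ≤ ℓ 2 3)).toNat
      + 256*(decide (2 ≤ ℓ 2 4)).toNat + 512*(decide (2 ≤ ℓ 3 4)).toNat := ⟨_, rfl⟩
  have htn : ∀ b : Bool, b.toNat ≤ 1 := by decide
  have hN : N < 1024 := by
    rw [hNdef]
    have h1 := htn (decide (2 ≤ ℓ 0 1)); have h2 := htn (decide (2 ≤ ℓ 0 2))
    have h3 := htn (decide (2 ≤ ℓ 0 3)); have h4 := htn (decide (2 ≤ ℓ 0 4))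
    have h5 := htn (decide (2 ≤ ℓ 1 2)); have h6 := htn (decide (2 ≤ ℓ 1 3))
    have h7 := htn (decide (2 ≤ ℓ 1 4)); have h8 := htn (decide (2 ≤ ℓ 2 3))
    have h9 := htn (decide (2 ≤ ℓ 2 4)); have h10 := htn (decide (2 ≤ ℓ 3 4))
    omega
  have hbit : ∀ k, k < 10 → N.testBit k =
      [decide (2 ≤ ℓ 0 1), decide (2 ≤ ℓ 0 2), decide (2 ≤ ℓ 0 3), decide (2 ≤ ℓ 0 4),
       decide (2 ≤ ℓ 1 2), decide (2 ≤ ℓ 1 3), decide (2 ≤ ℓ 1 4), decide (2 ≤ ℓ 2 3),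
       decide (2 ≤ ℓ 2 4), decide (2 ≤ ℓ 3 4)].getD k false := by
    intro k hk; rw [hNdef]; exact bits_key _ _ _ _ _ _ _ _ _ _ k hk
  have hElt : ∀ i j : Fin 5, (i : ℕ) < (j : ℕ) → (eb N i.val j.val = true ↔ 2 ≤ ℓ i j) := by
    intro i j hij
    fin_cases i <;> fin_cases j <;> simp only [Fin.val] at hij ⊢ <;>
      first
        | omega
        | (simp [eb, pidxN, hbit])
  have hE : ∀ i j : Fin 5, i ≠ j → (eb N i.val j.val = true ↔ 2 ≤ ℓ i j) := by
    intro i j hne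
    rcases lt_trichotomy (i : ℕ) (j : ℕ) with h|h|h
    · exact hElt i j h
    · exact absurd (Fin.ext h) hne
    · rw [hs i j, show eb N i.val j.val = eb N j.val i.val from by rw [eb, eb, pidxN_symm]]
      exact hElt j i h
  have hE1 : ∀ i j : Fin 5, i ≠ j → (eb N i.val j.val = false ↔ ℓ i j = 1) := by
    intro i j hne
    have h1 := hE i j hne
    have h2 := hp i j hne
    have h3 : ℓ i j = 1 ↔ ¬ 2 ≤ ℓ i j := by omega
    rw [h3, ← h1, Bool.not_eq_true]
  have fne : ∀ {p q : ℕ} (hp5 : p < 5) (hq5 : q < 5), p ≠ q → (⟨p, hp5⟩ : Fin 5) ≠ ⟨q, hq5⟩ :=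
    fun _ _ h => Fin.ne_of_val_ne h
  have H1 : ∀ i < 5, ∀ j < i, ∀ k < j, eb N i j = true ∨ eb N j k = true ∨ eb N i k = true := by
    intro i hi j hj k hk
    have hj5 : j < 5 := by omega
    have hk5 : k < 5 := by omega
    rcases htf ⟨i, hi⟩ ⟨j, hj5⟩ ⟨k, hk5⟩ (fne hi hj5 (by omega))
      (fne hj5 hk5 (by omega)) (fne hi hk5 (by omega)) with h|h|h
    · exact Or.inl ((hE ⟨i, hi⟩ ⟨j, hj5⟩ (fne hi hj5 (by omega))).mpr h)
    · exact Or.inr (Or.inl ((hE ⟨j, hj5⟩ ⟨k, hk5⟩ (fne hj5 hk5 (by omega))).mpr h))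
    · exact Or.inr (Or.inr ((hE ⟨i, hi⟩ ⟨k, hk5⟩ (fne hi hk5 (by omega))).mpr h))
  have H2 : ∀ x < 5, ∃ a < 5, a ≠ x ∧ ∃ c < 5, c ≠ x ∧ a ≠ c ∧ eb N a c = false ∧
      ∃ d < 5, d ≠ x ∧ a ≠ d ∧ c ≠ d ∧ eb N a d = false ∧ eb N c d = true ∧
      ∃ e < 5, e ≠ x ∧ a ≠ e ∧ c ≠ e ∧ d ≠ e ∧ eb N a e = true := by
    intro x hx
    obtain ⟨a, c, d, e, hax, hcx, hdx, hex, hac, had, hae, hcd, hce, hde, l1, l2, l3, l4⟩ :=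
      hK4 ⟨x, hx⟩
    exact ⟨a.val, a.isLt, Fin.val_ne_of_ne hax, c.val, c.isLt, Fin.val_ne_of_ne hcx,
      Fin.val_ne_of_ne hac, (hE1 a c hac).mpr l1,
      d.val, d.isLt, Fin.val_ne_of_ne hdx, Fin.val_ne_of_ne had, Fin.val_ne_of_ne hcd,
      (hE1 a d had).mpr l2, (hE a e hae).mpr l3 ▸ ((hE c d hcd).mpr l4),
      e.val, e.isLt, Fin.val_ne_of_ne hex, Fin.val_ne_of_ne hae, Fin.val_ne_of_ne hce,
      Fin.val_ne_of_ne hde, (hE a e hae).mpr l3⟩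
  rcases auxK5 N hN H1 H2 with
      ⟨a, ha, c, hc, hac, e1, d, hd, had, hcd, e2, e3, e, he, hae, hce, hde, e4, e5, e6,
        f, hf, haf, hcf, hdf, hef, e7, e8, e9, e10⟩ |
      ⟨a, ha, c, hc, hac, e1, d, hd, had, hcd, e2, e3, e, he, hae, hce, hde, e4, e5, e6,
        f, hf, haf, hcf, hdf, hef, e7, e8, e9, e10⟩
  · left
    refine ⟨⟨a, ha⟩, ⟨c, hc⟩, ⟨d, hd⟩, ⟨e, he⟩, ⟨f, hf⟩,
      ⟨Fin.ne_of_val_ne hac, Fin.ne_of_val_ne had, Fin.ne_of_val_ne hae, Fin.ne_of_val_ne haf,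
       Fin.ne_of_val_ne hcd, Fin.ne_of_val_ne hce, Fin.ne_of_val_ne hcf,
       Fin.ne_of_val_ne hde, Fin.ne_of_val_ne hdf, Fin.ne_of_val_ne hef⟩,
      (hE1 _ _ (Fin.ne_of_val_ne hac)).mp e1,
      (hE1 _ _ (Fin.ne_of_val_ne hcd)).mp e2,
      (hE1 _ _ (Fin.ne_of_val_ne hde)).mp e4,
      ?_,
      (hE _ _ (Fin.ne_of_val_ne had)).mp e3,
      (hE _ _ (Fin.ne_of_val_ne hce)).mp e6,
      (hE _ _ (Fin.ne_of_val_ne haf)).mp e7,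
      (hE _ _ (Fin.ne_of_val_ne hcf)).mp e8,
      (hE _ _ (Fin.ne_of_val_ne hdf)).mp e9,
      (hE _ _ (Fin.ne_of_val_ne hef)).mp e10⟩
    · exact (hE1 (⟨e, he⟩ : Fin 5) ⟨a, ha⟩ (Fin.ne_of_val_ne (Ne.symm hae))).mp e5
  · right
    refine ⟨⟨a, ha⟩, ⟨c, hc⟩, ⟨d, hd⟩, ⟨e, he⟩, ⟨f, hf⟩,
      ⟨Fin.ne_of_val_ne hac, Fin.ne_of_val_ne had, Fin.ne_of_val_ne hae, Fin.ne_of_val_ne haf,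
       Fin.ne_of_val_ne hcd, Fin.ne_of_val_ne hce, Fin.ne_of_val_ne hcf,
       Fin.ne_of_val_ne hde, Fin.ne_of_val_ne hdf, Fin.ne_of_val_ne hef⟩,
      (hE1 _ _ (Fin.ne_of_val_ne hac)).mp e1,
      (hE1 _ _ (Fin.ne_of_val_ne hcd)).mp e2,
      (hE1 _ _ (Fin.ne_of_val_ne hde)).mp e4,
      (hE1 _ _ (Fin.ne_of_val_ne hef)).mp e7,
      ?_,
      (hE _ _ (Fin.ne_of_val_ne had)).mp e3,
      (hE _ _ (Fin.ne_of_val_ne hae)).mp e5,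
      (hE _ _ (Fin.ne_of_val_ne hce)).mp e6,
      (hE _ _ (Fin.ne_of_val_ne hcf)).mp e9,
      (hE _ _ (Fin.ne_of_val_ne hdf)).mp e10⟩
    · exact (hE1 (⟨f, hf⟩ : Fin 5) ⟨a, ha⟩ (Fin.ne_of_val_ne (Ne.symm haf))).mp e8


end BurlingFormal
end

section
/- A 2-necklace graph G is a chandelier only if its two beads share a common vertex; conversely, if the two beads of a 2-necklace share a common vertex, then G is a chandelier (i.e., there is a vertex contained in all cycles of G). -/
/-! If the beads share no vertex, each bead is a cycle avoiding the other, so no vertex lies on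
every cycle. If they share a vertex `x`, then `x = b i = a (i + 1)` and `P i` is trivial. Deleting
`x` turns both beads into paths, attached to `P (i + 1)` only at the cut vertices `a i` and
`b (i + 1)`; so a cycle avoiding `x` would lie within one bead or within `P (i + 1)`, which is
impossible. -/

namespace SimpleGraph.Walk

variable {V : Type*} {G : SimpleGraph V}

theorem IsPath.edges_eq_nil_of_eq {u v : V} {p : G.Walk u v} (hp : p.IsPath) (h : u = v) :
    p.edges = [] := by
  subst h
  simp [(isPath_iff_nil.mp hp).eq_nil]

theorem IsCycle.exists_ne_mem_edges {u v : V} {c : G.Walk u u} (hc : c.IsCycle)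
    (hv : v ∈ c.support) : ∃ w₁ w₂, w₁ ≠ w₂ ∧ s(v, w₁) ∈ c.edges ∧ s(v, w₂) ∈ c.edges := by
  obtain ⟨w₁, w₂, hne, hnbr⟩ := Set.ncard_eq_two.mp (hc.ncard_neighborSet_toSubgraph_eq_two hv)
  have hmem : ∀ w, w ∈ c.toSubgraph.neighborSet v → s(v, w) ∈ c.edges := fun _ hw =>
    c.mem_edges_toSubgraph.mp hw
  exact ⟨w₁, w₂, hne, hmem _ (by simp [hnbr]), hmem _ (by simp [hnbr])⟩

/-- The first vertex of a path lies on only one of its edges, hence on no cycle made of them;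
peel it off. -/
theorem IsCycle.not_edgeSet_subset_of_isPath {w : V} {c : G.Walk w w} (hc : c.IsCycle) :
    ∀ {u v : V} {p : G.Walk u v}, p.IsPath → ¬ c.edgeSet ⊆ p.edgeSet
  | _, _, nil, _, hsub => by
    cases c with
    | nil => exact hc.not_nil .nil
    | cons => simpa using hsub (List.mem_cons_self ..)
  | u, _, cons (v := y) h q, hp, hsub => by
    rw [cons_isPath_iff] at hp
    have hoff : ∀ {z}, s(u, z) ∉ q.edges := fun he => hp.2 (q.fst_mem_support_of_mem_edges he)
    by_cases hu : u ∈ c.support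
    · obtain ⟨w₁, w₂, hne, h₁, h₂⟩ := hc.exists_ne_mem_edges hu
      have hy : ∀ {z}, s(u, z) ∈ c.edges → z = y := fun hz => by
        rcases List.mem_cons.mp (hsub hz) with he | he
        · exact Sym2.congr_right.mp he
        · exact absurd he hoff
      exact hne ((hy h₁).trans (hy h₂).symm)
    · refine hc.not_edgeSet_subset_of_isPath hp.1 fun e he => ?_
      rcases List.mem_cons.mp (hsub he) with rfl | he'
      · exact absurd (c.fst_mem_support_of_mem_edges he) hu
      · exact he'

/-- Rotated to start at `x`, the cycle `C` is an edge at `x` followed by a path; a cycle avoiding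
`x` can only use edges of that path. -/
theorem IsCycle.mem_support_of_edgeSet_subset {w v x : V} {c : G.Walk w w} {C : G.Walk v v}
    (hc : c.IsCycle) (hC : C.IsCycle) (hsub : c.edgeSet ⊆ C.edgeSet) (hx : x ∈ C.support) :
    x ∈ c.support := by
  classical
  by_contra hxc
  have hsub' : c.edgeSet ⊆ (C.rotate x hx).edgeSet := fun e he =>
    (C.rotate_edges x hx).mem_iff.mpr (hsub he)
  have hC' := hC.rotate hx
  generalize C.rotate x hx = C' at hsub' hC'
  cases C' with
  | nil => exact hC'.not_nil .nil
  | cons h p =>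
    refine hc.not_edgeSet_subset_of_isPath ((cons_isCycle_iff p h).mp hC').1 fun e he => ?_
    rcases List.mem_cons.mp (hsub' he) with rfl | he'
    · exact absurd (c.fst_mem_support_of_mem_edges he) hxc
    · exact he'

/-- Consecutive edges of a walk share an interior vertex, which meets only one of `E₁`, `E₂`. -/
theorem edgeSet_subset_or_edgeSet_subset_of_interior {E₁ E₂ : Set (Sym2 V)} :
    ∀ {u v : V} (p : G.Walk u v), p.edgeSet ⊆ E₁ ∪ E₂ →
      (∀ i, 0 < i → i < p.length → ∀ a b,
        s(p.getVert i, a) ∈ E₁ → s(p.getVert i, b) ∈ E₂ → False) →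
      p.edgeSet ⊆ E₁ ∨ p.edgeSet ⊆ E₂
  | _, _, nil, _, _ => by simp
  | _, _, cons h nil, hE, _ => by
    simpa [edgeSet_cons] using hE (List.mem_cons_self ..)
  | u, _, cons (v := y) h (cons (v := z) h' q), hE, hcut => by
    have ih := edgeSet_subset_or_edgeSet_subset_of_interior (cons h' q)
      (fun e he => hE (List.mem_cons_of_mem _ he))
      (fun i hi0 hi => hcut (i + 1) (by omega) (by simp at hi ⊢; omega))
    have hy : ∀ a b, s(y, a) ∈ E₁ → s(y, b) ∈ E₂ → False :=
      hcut 1 one_pos (by simp)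
    have hyz : s(y, z) ∈ (cons h' q).edgeSet := List.mem_cons_self ..
    rw [edgeSet_cons]
    rcases hE (List.mem_cons_self ..) with huy | huy <;> rcases ih with ih | ih
    · exact .inl (Set.insert_subset huy ih)
    · exact (hy u z (Sym2.eq_swap ▸ huy) (ih hyz)).elim
    · exact (hy z u (ih hyz) (Sym2.eq_swap ▸ huy)).elim
    · exact .inr (Set.insert_subset huy ih)

theorem IsCycle.edgeSet_subset_or_edgeSet_subset_of_cut {E₁ E₂ : Set (Sym2 V)} {w : V}
    {c : G.Walk w w} (hc : c.IsCycle) (v : V) (hE : c.edgeSet ⊆ E₁ ∪ E₂)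
    (hcut : ∀ u ∈ c.support, u ≠ v → ∀ a b, s(u, a) ∈ E₁ → s(u, b) ∈ E₂ → False) :
    c.edgeSet ⊆ E₁ ∨ c.edgeSet ⊆ E₂ := by
  classical
  by_cases hv : v ∈ c.support
  · have hrot : (c.rotate v hv).edgeSet = c.edgeSet :=
      Set.ext fun _ => (c.rotate_edges v hv).mem_iff
    rw [← hrot] at hE ⊢
    refine edgeSet_subset_or_edgeSet_subset_of_interior _ hE fun i hi0 hi => ?_
    refine hcut _ ((c.mem_support_rotate_iff v hv).mp (getVert_mem_support ..)) fun h => ?_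
    rw [(hc.rotate hv).getVert_endpoint_iff hi.le] at h
    omega
  · exact edgeSet_subset_or_edgeSet_subset_of_interior c hE fun i _ _ =>
      hcut _ (c.getVert_mem_support i) fun h => hv (h ▸ c.getVert_mem_support i)

end SimpleGraph.Walk

namespace BurlingFormal

open SimpleGraph Walk

theorem Necklace.edgeSet_subset_of_b_eq_a {V : Type} {G : SimpleGraph V} (N : Necklace G 2)
    {i : ZMod 2} (hi : N.b i = N.a (i + 1)) {u v : V} (p : G.Walk u v) :
    p.edgeSet ⊆ (N.B i).edgeSet ∪ ((N.B (i + 1)).edgeSet ∪ (N.P (i + 1)).edgeSet) := by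
  have hPi : (N.P i).edges = [] := (N.P_path i).edges_eq_nil_of_eq hi
  intro e he
  induction e using Sym2.ind with
  | h x y =>
    rcases N.cover_edge x y (p.adj_of_mem_edges he) with ⟨k, hk⟩ | ⟨k, hk⟩ <;>
      rcases (by decide : ∀ k l : ZMod 2, k = l ∨ k = l + 1) k i with rfl | rfl
    · exact .inl hk
    · exact .inr (.inl hk)
    · simp [hPi] at hk
    · exact .inr (.inr hk)

theorem Necklace.mem_support_of_isCycle {V : Type} {G : SimpleGraph V} (N : Necklace G 2)
    {i : ZMod 2} (hi : N.b i = N.a (i + 1)) {w : V} {c : G.Walk w w} (hc : c.IsCycle) :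
    N.a (i + 1) ∈ c.support := by
  have hcover := N.edgeSet_subset_of_b_eq_a hi c
  obtain ⟨hij, hji⟩ := (by decide : ∀ l : ZMod 2, l ≠ l + 1 ∧ l + 1 + 1 = l) i
  generalize i + 1 = j at hi hcover hij hji ⊢
  by_contra hx
  have hBB : ∀ u ∈ c.support, u ∈ (N.B i).support → u ∈ (N.B j).support →
      u = N.b j ∧ u = N.a i := by
    intro u hu hBi hBj
    rcases N.bead_disjoint i j hij u hBi hBj with ⟨-, -, rfl⟩ | ⟨-, hb, ha⟩
    · exact absurd hu hx
    · exact ⟨hb, ha⟩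
  rcases hc.edgeSet_subset_or_edgeSet_subset_of_cut (N.a i) hcover
      fun u hu hne _ _ h₁ h₂ => by
        have hBi := (N.B i).fst_mem_support_of_mem_edges h₁
        rcases h₂ with h₂ | h₂
        · exact hne (hBB u hu hBi ((N.B j).fst_mem_support_of_mem_edges h₂)).2
        · rcases N.path_bead_disjoint j i u ((N.P j).fst_mem_support_of_mem_edges h₂) hBi
            with rfl | h
          · exact hne (hBB _ hu hBi (N.b_mem j)).2
          · exact hne (hji ▸ h)
    with hBi | hrest
  · exact hx (hc.mem_support_of_edgeSet_subset (N.B_cycle i) hBi (hi ▸ N.b_mem i))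
  rcases hc.edgeSet_subset_or_edgeSet_subset_of_cut (N.b j) hrest
      fun u hu hne _ _ h₁ h₂ => by
        have hBj := (N.B j).fst_mem_support_of_mem_edges h₁
        rcases N.path_bead_disjoint j j u ((N.P j).fst_mem_support_of_mem_edges h₂) hBj
          with h | h
        · exact hne h
        · have hBi : u ∈ (N.B i).support := by rw [h, hji]; exact (N.B i).start_mem_support
          exact hne (hBB u hu hBi hBj).1
    with hBj | hPj
  · exact hx (hc.mem_support_of_edgeSet_subset (N.B_cycle j) hBj (N.B j).start_mem_support)
  · exact hc.not_edgeSet_subset_of_isPath (N.P_path j) hPj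

/-- a 2-necklace is a chandelier (has a vertex on every cycle) iff its two
beads share a common vertex. -/
theorem twoNecklace_chandelier_iff (V : Type) (G : SimpleGraph V) (N : Necklace G 2) :
    HasUniversalCycleVertex G ↔ ∃ x, x ∈ (N.B 0).support ∧ x ∈ (N.B 1).support := by
  constructor
  · rintro ⟨x, hx⟩
    exact ⟨x, hx _ _ (N.B_cycle 0), hx _ _ (N.B_cycle 1)⟩
  · rintro ⟨x, h₀, h₁⟩
    obtain ⟨i, hi⟩ : ∃ i, N.b i = N.a (i + 1) := by
      rcases N.bead_disjoint 0 1 (by decide) x h₀ h₁ with ⟨-, hb, ha⟩ | ⟨-, hb, ha⟩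
      · exact ⟨0, hb.symm.trans ha⟩
      · exact ⟨1, hb.symm.trans ha⟩
    exact ⟨_, fun _ _ => N.mem_support_of_isCycle hi⟩

end BurlingFormal
end
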